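/- Let L be a finite-dimensional Lie algebra over any field F, and let P be the intersection of all maximal subalgebras M of L with L = M + Ñ(L). Then the core P_L of P (the largest ideal of L contained in P) equals φ(L). -/

import Mathlib

namespace Paper

open LieAlgebra

section AlgDefs

variable (F : Type*) [Field F] (L : Type*) [LieRing L] [LieAlgebra F L]

/-- The nilradical of a Lie algebra: the largest nilpotent ideal (the sup of nilpotent ideals). -/
noncomputable def nilrad : LieIdeal F L :=
  sSup {I : LieIdeal F L | LieModule.IsNilpotent I I}

/-- The nilpotency class of a Lie algebra. -/
noncomputable def nilClass (F : Type*) [Field F] (L : Type*) [LieRing L] [LieAlgebra F L] : ℕ := LieModule.nilpotencyLength L L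

/-- A Lie algebra is nilregular if the field has characteristic zero, or characteristic `p > 0`
and its nilradical has nilpotency class less than `p - 1`. -/
noncomputable def Nilregular : Prop :=
  ringChar F = 0 ∨ nilClass F (nilrad F L) < ringChar F - 1

/-- A Lie algebra is solregular if the field has characteristic zero, or characteristic `p > 0`
and its radical has derived length less than `log₂ p`. -/
noncomputable def Solregular : Prop :=
  ringChar F = 0 ∨ 2 ^ LieAlgebra.derivedLength F (LieAlgebra.radical F L) < ringChar F

/-- Regular means nilregular or solregular. -/
noncomputable def Regular : Prop := Nilregular F L ∨ Solregular F L

end AlgDefs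

section IdealDefs

variable {F : Type*} [Field F] {L : Type*} [LieRing L] [LieAlgebra F L]

/-- The centraliser `C_L(I)` of an ideal `I`, as an ideal of `L`. -/
def centralizer (I : LieIdeal F L) : LieIdeal F L where
  carrier := {x : L | ∀ y ∈ I, ⁅x, y⁆ = 0}
  zero_mem' := by intro y hy; simp
  add_mem' := by intro a b ha hb y hy; rw [add_lie, ha y hy, hb y hy, add_zero]
  smul_mem' := by intro c x hx y hy; rw [smul_lie, hx y hy, smul_zero]
  lie_mem := by
    intro x m hm y hy
    have h1 : ⁅x, ⁅m, y⁆⁆ = (0 : L) := by rw [hm y hy, lie_zero]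
    have h2 : ⁅m, ⁅x, y⁆⁆ = (0 : L) := hm _ (I.lie_mem hy)
    show ⁅⁅x, m⁆, y⁆ = (0 : L)
    rw [lie_lie, h1, h2, sub_zero]

/-- The centre `Z(I)` of an ideal `I`, as an ideal of `L`. -/
def idealCenter (I : LieIdeal F L) : LieIdeal F L where
  carrier := {x : L | x ∈ I ∧ ∀ y ∈ I, ⁅x, y⁆ = 0}
  zero_mem' := ⟨I.zero_mem, by intro y hy; simp⟩
  add_mem' := by
    intro a b ha hb
    exact ⟨I.add_mem ha.1 hb.1, fun y hy => by rw [add_lie, ha.2 y hy, hb.2 y hy, add_zero]⟩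
  smul_mem' := by
    intro c x hx
    exact ⟨I.smul_mem c hx.1, fun y hy => by rw [smul_lie, hx.2 y hy, smul_zero]⟩
  lie_mem := by
    intro x m hm
    refine ⟨I.lie_mem hm.1, fun y hy => ?_⟩
    have h1 : ⁅x, ⁅m, y⁆⁆ = (0 : L) := by rw [hm.2 y hy, lie_zero]
    have h2 : ⁅m, ⁅x, y⁆⁆ = (0 : L) := hm.2 _ (I.lie_mem hy)
    show ⁅⁅x, m⁆, y⁆ = (0 : L)
    rw [lie_lie, h1, h2, sub_zero]

/-- The centraliser `C_L(A/B)` of a chief factor, as an ideal of `L`. -/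
def chiefCentralizer (A B : LieIdeal F L) : LieIdeal F L where
  carrier := {x : L | ∀ a ∈ A, ⁅x, a⁆ ∈ B}
  zero_mem' := by intro a ha; simp [B.zero_mem]
  add_mem' := by intro x y hx hy a ha; rw [add_lie]; exact B.add_mem (hx a ha) (hy a ha)
  smul_mem' := by intro c x hx a ha; rw [smul_lie]; exact B.smul_mem c (hx a ha)
  lie_mem := by
    intro x m hm a ha
    show ⁅⁅x, m⁆, a⁆ ∈ B
    rw [lie_lie]
    exact B.sub_mem (B.lie_mem (hm a ha)) (hm _ (A.lie_mem ha))

/-- `A/Z` is a minimal ideal of `L/Z` (via the ideal correspondence). -/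
def IsMinModIdeal (Z A : LieIdeal F L) : Prop :=
  Z < A ∧ ∀ B : LieIdeal F L, Z ≤ B → B ≤ A → B = Z ∨ B = A

/-- `A` is a minimal ideal of `L`. -/
def IsMinimalIdeal (A : LieIdeal F L) : Prop := IsMinModIdeal ⊥ A

/-- An ideal `A` of `L` is quasi-minimal if `A² = A` and `A/Z(A)` is a minimal ideal
of `L/Z(A)`. -/
def IsQuasiMinimal (A : LieIdeal F L) : Prop :=
  ⁅A, A⁆ = A ∧ IsMinModIdeal (idealCenter A) A

end IdealDefs

section MoreDefs

variable (F : Type*) [Field F] (L : Type*) [LieRing L] [LieAlgebra F L]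

/-- `E†(L)`: the subalgebra generated by the quasi-minimal components of `L`. -/
noncomputable def Edagger : LieSubalgebra F L :=
  LieSubalgebra.lieSpan F L (⋃ A ∈ {A : LieIdeal F L | IsQuasiMinimal A}, (A : Set L))

/-- `N†(L) = N(L) + E†(L)`: the quasi-minimal radical of `L`. -/
noncomputable def Ndagger : LieSubalgebra F L :=
  LieIdeal.toLieSubalgebra F L (nilrad F L) ⊔ Edagger F L

/-- The generalised nilradical `N*(L)`: the ideal containing `N = N(L)` with
`N*(L)/N` the sum of all minimal ideals of `L/N` contained in `(N + C_L(N))/N`. -/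
noncomputable def Nstar : LieIdeal F L :=
  nilrad F L ⊔ sSup {A : LieIdeal F L | IsMinModIdeal (nilrad F L) A ∧
    A ≤ nilrad F L ⊔ centralizer (nilrad F L)}

/-- The Frattini ideal: the largest ideal contained in every maximal subalgebra. -/
def frattini : LieIdeal F L :=
  sSup {I : LieIdeal F L | ∀ M : LieSubalgebra F L, IsCoatom M → (I : Set L) ⊆ M}

/-- `Ñ(L)`: the ideal with `Ñ(L)/φ(L) = Soc (L/φ(L))`. -/
noncomputable def Ntilde : LieIdeal F L :=
  frattini F L ⊔ sSup {A : LieIdeal F L | IsMinModIdeal (frattini F L) A}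

/-- A characteristic ideal: one invariant under all derivations. -/
def IsCharIdeal (J : LieIdeal F L) : Prop :=
  ∀ D : LieDerivation F L L, ∀ x ∈ J, D x ∈ J

/-- The characteristic radical `R_c(L)`: the sum of all solvable characteristic ideals. -/
noncomputable def charRadical : LieIdeal F L :=
  sSup {J : LieIdeal F L | LieAlgebra.IsSolvable J ∧ IsCharIdeal F L J}

/-- A subideal: a subalgebra joined to `L` by a chain of successive ideals. -/
def IsSubideal (S : LieSubalgebra F L) : Prop :=
  ∃ n : ℕ, ∃ c : Fin (n + 1) → LieSubalgebra F L,
    c 0 = S ∧ c (Fin.last n) = ⊤ ∧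
    ∀ i : Fin n, c i.castSucc ≤ c i.succ ∧
      ∀ x ∈ c i.succ, ∀ y ∈ c i.castSucc, ⁅x, y⁆ ∈ c i.castSucc

end MoreDefs

end Paper

namespace LieSubalgebra

variable {R : Type*} [CommRing R] {L : Type*} [LieRing L] [LieAlgebra R L]

def supLieIdeal (M : LieSubalgebra R L) (A : LieIdeal R L) : LieSubalgebra R L :=
  { M.toSubmodule ⊔ A.toSubmodule with
    lie_mem' := by
      intro x y hx hy
      obtain ⟨m, hm, a, ha, rfl⟩ := Submodule.mem_sup.mp hx
      obtain ⟨m', hm', a', ha', rfl⟩ := Submodule.mem_sup.mp hy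
      have hsplit : ⁅m + a, m' + a'⁆ = ⁅m, m'⁆ + (⁅m, a'⁆ + ⁅a, m' + a'⁆) := by
        rw [add_lie, lie_add, add_assoc]
      rw [hsplit]
      exact Submodule.add_mem_sup (M.lie_mem hm hm')
        (A.add_mem (lie_mem_right R L A _ _ ha') (lie_mem_left R L A _ _ ha)) }

theorem toSubmodule_supLieIdeal (M : LieSubalgebra R L) (A : LieIdeal R L) :
    (M.supLieIdeal A).toSubmodule = M.toSubmodule ⊔ A.toSubmodule :=
  rfl

theorem toSubmodule_sup_eq_top_of_isCoatom {M : LieSubalgebra R L} (hM : IsCoatom M)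
    {A : LieIdeal R L} (hA : ¬ A.toSubmodule ≤ M.toSubmodule) :
    M.toSubmodule ⊔ A.toSubmodule = ⊤ := by
  have hlt : M < M.supLieIdeal A :=
    lt_of_le_of_ne (fun _ hx ↦ Submodule.mem_sup_left hx)
      (fun h ↦ hA (le_sup_right.trans_eq (congrArg LieSubalgebra.toSubmodule h).symm))
  rw [← toSubmodule_supLieIdeal, hM.2 _ hlt, top_toSubmodule]

end LieSubalgebra

namespace Paper

section Frattini

variable {F : Type*} [Field F] {L : Type*} [LieRing L] [LieAlgebra F L]

theorem le_frattini_iff {I : LieIdeal F L} :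
    I ≤ frattini F L ↔
      ∀ M : LieSubalgebra F L, IsCoatom M → I.toSubmodule ≤ M.toSubmodule := by
  refine ⟨fun hI M hM ↦ ?_, fun hI ↦ le_sSup fun M hM ↦ hI M hM⟩
  refine le_trans ((LieSubmodule.toSubmodule_le_toSubmodule _ _).mpr hI) ?_
  rw [frattini, LieSubmodule.sSup_toSubmodule]
  exact sSup_le fun _ ⟨J, hJ, hJeq⟩ ↦ hJeq ▸ hJ M hM

theorem frattini_le_of_isCoatom {M : LieSubalgebra F L} (hM : IsCoatom M) :
    (frattini F L).toSubmodule ≤ M.toSubmodule :=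
  le_frattini_iff.mp le_rfl M hM

theorem exists_isMinModIdeal_le [IsArtinian F L] {Z B : LieIdeal F L} (h : Z < B) :
    ∃ A, IsMinModIdeal Z A ∧ A ≤ B := by
  obtain ⟨A, ⟨hZA, hAB⟩, hmin⟩ :=
    (LieSubmodule.wellFoundedLT_of_isArtinian F L L).wf.has_min
      {A : LieIdeal F L | Z < A ∧ A ≤ B} ⟨B, h, le_rfl⟩
  refine ⟨A, ⟨hZA, fun C hZC hCA ↦ ?_⟩, hAB⟩
  rcases hZC.eq_or_lt with hZC | hZC
  · exact Or.inl hZC.symm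
  · exact Or.inr (hCA.eq_of_not_lt (hmin C ⟨hZC, hCA.trans hAB⟩))

theorem le_Ntilde_of_isMinModIdeal {A : LieIdeal F L} (hA : IsMinModIdeal (frattini F L) A) :
    A ≤ Ntilde F L :=
  (le_sSup (s := {B | IsMinModIdeal (frattini F L) B}) hA).trans le_sup_right

/-- An ideal inside every maximal subalgebra supplementing `Ñ(L)` lies in `φ(L)`: otherwise a
minimal ideal `A/φ(L)` of `L/φ(L)` below it escapes some maximal subalgebra `M`, and then
`M + Ñ(L) ⊇ M + A = L`, so `M` is one of those subalgebras after all. -/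
theorem le_frattini_of_le_sInf_supplements [IsArtinian F L] {K : LieIdeal F L}
    (hK : (K : Set L) ⊆ (sInf {M : LieSubalgebra F L | IsCoatom M ∧
        M.toSubmodule ⊔ (Ntilde F L).toSubmodule = ⊤} : LieSubalgebra F L)) :
    K ≤ frattini F L := by
  by_contra hKφ
  obtain ⟨A, hA, hAK⟩ := exists_isMinModIdeal_le (left_lt_sup.mpr hKφ)
  obtain ⟨M, hM, hAM⟩ :
      ∃ M : LieSubalgebra F L, IsCoatom M ∧ ¬ A.toSubmodule ≤ M.toSubmodule := by
    simpa [le_frattini_iff] using hA.1.not_ge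
  have hMN : M.toSubmodule ⊔ (Ntilde F L).toSubmodule = ⊤ :=
    top_le_iff.mp <| (LieSubalgebra.toSubmodule_sup_eq_top_of_isCoatom hM hAM).ge.trans <|
      sup_le_sup_left ((LieSubmodule.toSubmodule_le_toSubmodule _ _).mpr
        (le_Ntilde_of_isMinModIdeal hA)) _
  have hKM : K.toSubmodule ≤ M.toSubmodule :=
    hK.trans (SetLike.coe_subset_coe.mpr (sInf_le ⟨hM, hMN⟩))
  apply hAM
  calc A.toSubmodule ≤ (frattini F L ⊔ K).toSubmodule :=
        (LieSubmodule.toSubmodule_le_toSubmodule _ _).mpr hAK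
    _ = (frattini F L).toSubmodule ⊔ K.toSubmodule := LieSubmodule.sup_toSubmodule _ _
    _ ≤ M.toSubmodule := sup_le (frattini_le_of_isCoatom hM) hKM

end Frattini

/-- The core of the intersection of all maximal subalgebras `M` with `L = M + Ñ(L)`
equals `φ(L)`. -/
theorem stmt_19 (F : Type*) [Field F] (L : Type*) [LieRing L] [LieAlgebra F L]
    [FiniteDimensional F L] :
    sSup {I : LieIdeal F L | (I : Set L) ⊆
        ((sInf {M : LieSubalgebra F L | IsCoatom M ∧
            M.toSubmodule ⊔ ((Ntilde F L).toSubmodule) = ⊤} : LieSubalgebra F L) : Set L)}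
      = frattini F L := by
  refine le_antisymm (sSup_le fun K hK ↦ le_frattini_of_le_sInf_supplements hK) (le_sSup ?_)
  rw [LieSubalgebra.coe_sInf]
  exact Set.subset_iInter₂ fun M hM ↦ frattini_le_of_isCoatom hM.1

end Paper
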